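/- Let S₁ and S₂ be byte strings. If some merge applied during the run of encode on S₁ ⧺ S₂ crosses position |S₁|, then the final token sequence encode(S₁ ⧺ S₂) contains a token that crosses position |S₁|; in particular, encode(S₁ ⧺ S₂) ≠ encode(S₁) ⧺ encode(S₂). -/

import Mathlib

/-!
Formalization of a BPE tokenizer with an ordered merge list.

* `σ` is the (finite) byte alphabet, `τ` is the (finite) vocabulary of tokens.
* `base` embeds each byte as a distinct base token.
* `dec` decodes a single token to a byte string; it is extended to token
  sequences by concatenation (`decodeSeq`).
* `merges` is the ordered merge list; each merge `(l, r, n)` replaces an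
  adjacent pair `(l, r)` by the single token `n`, and satisfies
  `dec n = dec l ++ dec r`.
* `encode` turns a byte string into its base tokens and then, processing the
  merges in order, repeatedly replaces the leftmost adjacent occurrence of
  `(l, r)` by `n` until no occurrence remains, before moving to the next merge.
-/

structure BPE (σ τ : Type*) where
  base : σ → τ
  dec : τ → List σ
  merges : List (τ × τ × τ)
  base_inj : Function.Injective base
  dec_base : ∀ b, dec (base b) = [b]
  dec_merge : ∀ m ∈ merges, dec m.2.2 = dec m.1 ++ dec m.2.1

namespace BPE

variable {σ τ : Type*} [DecidableEq τ]

/-- Decode a token sequence by concatenating the decodings of its tokens. -/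
def decodeSeq (B : BPE σ τ) (T : List τ) : List σ := (T.map B.dec).flatten

/-- Replace the leftmost adjacent occurrence of `(l, r)` by `n`, if any,
also returning the starting byte position of the replaced pair. -/
def replaceLeftmost (B : BPE σ τ) (l r n : τ) : List τ → Option (ℕ × List τ)
  | [] => none
  | [_] => none
  | t :: u :: rest =>
      if t = l ∧ u = r then some (0, n :: rest)
      else (B.replaceLeftmost l r n (u :: rest)).map
        (fun p => (p.1 + (B.dec t).length, t :: p.2))

/-- Repeatedly replace the leftmost adjacent occurrence of `(l, r)` by `n`
until no occurrence remains (the fuel, taken to be the length of the list,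
suffices since every replacement shortens the list).  Also returns the list
of byte positions at which replacements were performed, in order. -/
def runMerge (B : BPE σ τ) (l r n : τ) : ℕ → List τ → List τ × List ℕ
  | 0, T => (T, [])
  | fuel + 1, T =>
    match B.replaceLeftmost l r n T with
    | none => (T, [])
    | some (p, T') =>
      let q := B.runMerge l r n fuel T'
      (q.1, p :: q.2)

/-- Process an (indexed) list of merges in order, starting from token sequence
`T`; returns the final token sequence together with the ordered list of merge
applications performed, each recorded as a pair
(index of the merge in the merge list, starting byte position). -/
def encodeRunAux (B : BPE σ τ) : List (ℕ × τ × τ × τ) → List τ → List τ × List (ℕ × ℕ)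
  | [], T => (T, [])
  | (i, l, r, n) :: ms, T =>
    let q := B.runMerge l r n T.length T
    let q' := B.encodeRunAux ms q.1
    (q'.1, q.2.map (fun p => (i, p)) ++ q'.2)

/-- The full run of the BPE encoder on a byte string `S`: the final token
sequence together with the ordered list of merge applications performed. -/
def encodeRun (B : BPE σ τ) (S : List σ) : List τ × List (ℕ × ℕ) :=
  B.encodeRunAux (B.merges.zipIdx.map Prod.swap) (S.map B.base)

/-- BPE encoding of a byte string. -/
def encode (B : BPE σ τ) (S : List σ) : List τ := (B.encodeRun S).1

/-- The ordered list of merge applications (merge index, starting byte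
position) performed during the run of `encode` on `S`. -/
def encodeApps (B : BPE σ τ) (S : List σ) : List (ℕ × ℕ) := (B.encodeRun S).2

/-- A token sequence is *valid* if it is the canonical encoding of the byte
string it decodes to. -/
def Valid (B : BPE σ τ) (T : List τ) : Prop := B.encode (B.decodeSeq T) = T

/-- The merge list is in *normal form*:
(i) each token is produced by at most one merge;
(ii) every token `t` satisfies `encode (dec t) = [t]`;
(iii) every merge occurs later in the merge list than the merges producing
each of its two input tokens. -/
def NormalForm (B : BPE σ τ) : Prop :=
  (∀ i j (hi : i < B.merges.length) (hj : j < B.merges.length),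
      (B.merges[i]'hi).2.2 = (B.merges[j]'hj).2.2 → i = j) ∧
  (∀ t : τ, B.encode (B.dec t) = [t]) ∧
  (∀ i j (hi : i < B.merges.length) (hj : j < B.merges.length),
      (B.merges[i]'hi).2.2 = (B.merges[j]'hj).1 ∨
        (B.merges[i]'hi).2.2 = (B.merges[j]'hj).2.1 → i < j)

/-- The merge application `app = (t, p)` *crosses* byte position `c` if the
token it creates (the output of merge `t`, starting at byte position `p`)
has a byte span properly containing `c`. -/
def AppCrosses (B : BPE σ τ) (app : ℕ × ℕ) (c : ℕ) : Prop :=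
  ∃ h : app.1 < B.merges.length,
    app.2 < c ∧ c < app.2 + (B.dec (B.merges[app.1]'h).2.2).length

/-- Some merge applied during the run of `encode` on `S` crosses position `c`. -/
def MergeCrossesInRun (B : BPE σ τ) (S : List σ) (c : ℕ) : Prop :=
  ∃ app ∈ B.encodeApps S, B.AppCrosses app c

/-- The token sequence `U` contains a token whose byte span properly
contains position `c`. -/
def TokenCrosses (B : BPE σ τ) (U : List τ) (c : ℕ) : Prop :=
  ∃ k, k < U.length ∧
    (B.decodeSeq (U.take k)).length < c ∧ c < (B.decodeSeq (U.take (k + 1))).length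

end BPE
namespace BPE

variable {σ τ : Type*} [DecidableEq τ]

/-- The *Valid Covering Tree* of a byte string `P`: the set of all nonempty
token sequences `T = [t₁, …, tₙ]` such that (1) `P` is a prefix of
`decode T`, (2) `decode [t₁, …, t_{n-1}]` is a prefix of `P`, and
(3) `T` is valid. -/
def VCT (B : BPE σ τ) (P : List σ) : Set (List τ) :=
  {T | T ≠ [] ∧ P <+: B.decodeSeq T ∧ B.decodeSeq T.dropLast <+: P ∧ B.Valid T}

/-- The maximal prefix of a token sequence whose total decoded length is at
most `k`, i.e. the tokens whose byte spans end at or before position `k`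
(together with their spans, which are determined by the preceding tokens). -/
def spanPrefix (B : BPE σ τ) (k : ℕ) : List τ → List τ
  | [] => []
  | t :: T =>
      if (B.dec t).length ≤ k then t :: B.spanPrefix (k - (B.dec t).length) T
      else []

/-- `L₀` is a *lookahead bound* for the tokenizer if whenever two byte strings
agree on their first `k + L₀` bytes, the tokens of their encodings whose byte
spans end at or before position `k` coincide (with identical spans). -/
def LookaheadBound (B : BPE σ τ) (L₀ : ℕ) : Prop :=
  ∀ (x x' : List σ) (k : ℕ), x.take (k + L₀) = x'.take (k + L₀) →
    B.spanPrefix k (B.encode x) = B.spanPrefix k (B.encode x')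

/-- `U'` is the minimal covering prefix of `U` with respect to `P`: the
shortest prefix of `U` whose decoding has `P` as a prefix. -/
def IsMinCover (B : BPE σ τ) (P : List σ) (U U' : List τ) : Prop :=
  U' <+: U ∧ P <+: B.decodeSeq U' ∧
    ∀ U'' : List τ, U'' <+: U → P <+: B.decodeSeq U'' → U'.length ≤ U''.length

/-- The pair `(l, r)` occurs adjacently in `T`. -/
def PairAdj (l r : τ) (T : List τ) : Prop := ∃ A C, T = A ++ l :: r :: C

/-- The merge application `a = (t, i)` (merge index `t`, starting byte
position `i` of the left token) is applicable to the token sequence `T`. -/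
def Applicable (B : BPE σ τ) (a : ℕ × ℕ) (T : List τ) : Prop :=
  ∃ h : a.1 < B.merges.length, ∃ A C : List τ,
    T = A ++ (B.merges[a.1]'h).1 :: (B.merges[a.1]'h).2.1 :: C ∧
      (B.decodeSeq A).length = a.2

/-- `T'` is obtained from `T` by performing the merge application `a = (t, i)`:
the input pair of merge `t`, occurring adjacently in `T` with the left token
starting at byte position `i`, is replaced by the output token of merge `t`. -/
def ApplyApp (B : BPE σ τ) (a : ℕ × ℕ) (T T' : List τ) : Prop :=
  ∃ h : a.1 < B.merges.length, ∃ A C : List τ,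
    T = A ++ (B.merges[a.1]'h).1 :: (B.merges[a.1]'h).2.1 :: C ∧
      (B.decodeSeq A).length = a.2 ∧
      T' = A ++ (B.merges[a.1]'h).2.2 :: C

/-- Lexicographic order on merge applications `(t, i)`. -/
def appLE (a a' : ℕ × ℕ) : Prop :=
  a.1 < a'.1 ∨ (a.1 = a'.1 ∧ a.2 ≤ a'.2)

/-- `GreedyChain B T₀ apps T` holds when the sequence of merge applications
`apps` leads from token sequence `T₀` to token sequence `T`, and each applied
application is lexicographically least among those applicable to the current
token sequence. -/
inductive GreedyChain (B : BPE σ τ) : List τ → List (ℕ × ℕ) → List τ → Prop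
  | nil (T : List τ) : GreedyChain B T [] T
  | cons {T T' Tf : List τ} {a : ℕ × ℕ} {apps : List (ℕ × ℕ)} :
      B.ApplyApp a T T' →
      (∀ a', B.Applicable a' T → appLE a a') →
      GreedyChain B T' apps Tf →
      GreedyChain B T (a :: apps) Tf

end BPE
/-!
Every merge concatenates two adjacent tokens, so the set of token boundaries (byte positions
where one token ends and the next begins) can only shrink during the run of `encode`. A merge
crossing `c` removes the boundary at `c`; hence there is no boundary at `c` in the final sequence
either, and the token containing byte `c` crosses it. Were the encoding
`encode S₁ ++ encode S₂`, position `|S₁|` would be a boundary.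
-/

namespace BPE

variable {σ τ : Type*} (B : BPE σ τ)

@[simp]
lemma decodeSeq_nil : B.decodeSeq [] = [] := rfl

@[simp]
lemma decodeSeq_cons (t : τ) (T : List τ) : B.decodeSeq (t :: T) = B.dec t ++ B.decodeSeq T := by
  simp [decodeSeq]

@[simp]
lemma decodeSeq_append (T U : List τ) : B.decodeSeq (T ++ U) = B.decodeSeq T ++ B.decodeSeq U := by
  simp [decodeSeq]

lemma decodeSeq_map_base (S : List σ) : B.decodeSeq (S.map B.base) = S := by
  induction S with
  | nil => rfl
  | cons b S ih => simp [B.dec_base, ih]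

/-- Byte position `c` is a boundary between two tokens of `U` (or one of its two ends). -/
def IsTokenBoundary (U : List τ) (c : ℕ) : Prop :=
  ∃ k, (B.decodeSeq (U.take k)).length = c

section IsTokenBoundary

variable {B}

lemma isTokenBoundary_zero (U : List τ) : B.IsTokenBoundary U 0 := ⟨0, by simp⟩

lemma isTokenBoundary_append_length (U V : List τ) :
    B.IsTokenBoundary (U ++ V) (B.decodeSeq U).length :=
  ⟨U.length, by simp⟩

lemma IsTokenBoundary.cons {U : List τ} {c : ℕ} (t : τ) (h : B.IsTokenBoundary U c) :
    B.IsTokenBoundary (t :: U) ((B.dec t).length + c) := by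
  obtain ⟨k, rfl⟩ := h
  exact ⟨k + 1, by simp⟩

lemma isTokenBoundary_cons_iff {t : τ} {U : List τ} {c : ℕ} :
    B.IsTokenBoundary (t :: U) c ↔
      c = 0 ∨ ∃ c', B.IsTokenBoundary U c' ∧ c = (B.dec t).length + c' := by
  refine ⟨?_, ?_⟩
  · rintro ⟨_ | k, rfl⟩
    · simp
    · exact Or.inr ⟨_, ⟨k, rfl⟩, by simp⟩
  · rintro (rfl | ⟨c', hc', rfl⟩)
    exacts [isTokenBoundary_zero _, hc'.cons t]

lemma IsTokenBoundary.of_merge {l r n : τ} (hn : B.dec n = B.dec l ++ B.dec r) {C : List τ} :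
    ∀ {A : List τ} {c : ℕ},
      B.IsTokenBoundary (A ++ n :: C) c → B.IsTokenBoundary (A ++ l :: r :: C) c
  | [], c, h => by
    rcases isTokenBoundary_cons_iff.mp h with rfl | ⟨c', hc', rfl⟩
    · exact isTokenBoundary_zero _
    · simpa [hn, add_assoc] using (hc'.cons r).cons l
  | a :: A, c, h => by
    rcases isTokenBoundary_cons_iff.mp h with rfl | ⟨c', hc', rfl⟩
    · exact isTokenBoundary_zero _
    · exact (of_merge hn hc').cons a

lemma not_isTokenBoundary_of_lt_of_lt {n : τ} {C : List τ} :
    ∀ {A : List τ} {c : ℕ}, (B.decodeSeq A).length < c →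
      c < (B.decodeSeq A).length + (B.dec n).length → ¬B.IsTokenBoundary (A ++ n :: C) c
  | [], c, h₁, h₂, h => by
    rcases isTokenBoundary_cons_iff.mp h with rfl | ⟨c', -, rfl⟩ <;> simp at h₁ h₂
  | a :: A, c, h₁, h₂, h => by
    rcases isTokenBoundary_cons_iff.mp h with rfl | ⟨c', hc', rfl⟩
    · simp at h₁
    · simp only [decodeSeq_cons, List.length_append] at h₁ h₂
      exact not_isTokenBoundary_of_lt_of_lt (by omega) (by omega) hc'

lemma tokenCrosses_of_not_isTokenBoundary :
    ∀ {U : List τ} {c : ℕ}, ¬B.IsTokenBoundary U c → c ≤ (B.decodeSeq U).length →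
      B.TokenCrosses U c
  | [], c, hnb, hc => by
    obtain rfl : c = 0 := by simpa using hc
    exact (hnb (isTokenBoundary_zero _)).elim
  | t :: U, c, hnb, hc => by
    have hc₀ : c ≠ 0 := by rintro rfl; exact hnb (isTokenBoundary_zero _)
    rcases lt_trichotomy c (B.dec t).length with hlt | rfl | hgt
    · exact ⟨0, by simp, by simp; omega, by simpa using hlt⟩
    · exact (hnb (by simpa using (isTokenBoundary_zero U).cons t)).elim
    · have hnb' : ¬B.IsTokenBoundary U (c - (B.dec t).length) := fun h' =>
        hnb (by simpa [Nat.add_sub_cancel' hgt.le] using h'.cons t)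
      obtain ⟨k, hk, hk₁, hk₂⟩ :=
        tokenCrosses_of_not_isTokenBoundary hnb' (by simp at hc; omega)
      exact ⟨k + 1, by simpa using hk, by simp; omega, by simp; omega⟩

end IsTokenBoundary

inductive MergeTrace : List τ → List (ℕ × ℕ) → List τ → Prop
  | nil (T : List τ) : MergeTrace T [] T
  | cons {T T' Tf : List τ} {a : ℕ × ℕ} {apps : List (ℕ × ℕ)} :
      B.ApplyApp a T T' → MergeTrace T' apps Tf → MergeTrace T (a :: apps) Tf

section MergeTrace

variable {B} {T T' Tf : List τ} {a : ℕ × ℕ} {c : ℕ}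

lemma ApplyApp.decodeSeq_eq (h : B.ApplyApp a T T') : B.decodeSeq T' = B.decodeSeq T := by
  obtain ⟨hi, A, C, rfl, -, rfl⟩ := h
  simp [B.dec_merge _ (List.getElem_mem hi)]

lemma ApplyApp.isTokenBoundary (h : B.ApplyApp a T T') (hc : B.IsTokenBoundary T' c) :
    B.IsTokenBoundary T c := by
  obtain ⟨hi, A, C, rfl, -, rfl⟩ := h
  exact hc.of_merge (B.dec_merge _ (List.getElem_mem hi))

lemma ApplyApp.not_isTokenBoundary (h : B.ApplyApp a T T') (hc : B.AppCrosses a c) :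
    ¬B.IsTokenBoundary T' c := by
  obtain ⟨hi, A, C, -, hA, rfl⟩ := h
  obtain ⟨_, hc₁, hc₂⟩ := hc
  exact not_isTokenBoundary_of_lt_of_lt (hA ▸ hc₁) (hA ▸ hc₂)

lemma MergeTrace.append {apps apps' : List (ℕ × ℕ)} {T'' : List τ}
    (h : B.MergeTrace T apps T') (h' : B.MergeTrace T' apps' T'') :
    B.MergeTrace T (apps ++ apps') T'' := by
  induction h with
  | nil => exact h'
  | cons hstep _ ih => exact .cons hstep (ih h')

lemma MergeTrace.decodeSeq_eq {apps : List (ℕ × ℕ)} (h : B.MergeTrace T apps Tf) :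
    B.decodeSeq Tf = B.decodeSeq T := by
  induction h with
  | nil => rfl
  | cons hstep _ ih => rw [ih, hstep.decodeSeq_eq]

lemma MergeTrace.isTokenBoundary {apps : List (ℕ × ℕ)} (h : B.MergeTrace T apps Tf)
    (hc : B.IsTokenBoundary Tf c) : B.IsTokenBoundary T c := by
  induction h with
  | nil => exact hc
  | cons hstep _ ih => exact hstep.isTokenBoundary (ih hc)

lemma MergeTrace.not_isTokenBoundary {apps : List (ℕ × ℕ)} (h : B.MergeTrace T apps Tf)
    (ha : a ∈ apps) (hc : B.AppCrosses a c) : ¬B.IsTokenBoundary Tf c := by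
  induction h with
  | nil => simp at ha
  | cons hstep htail ih =>
    rcases List.mem_cons.mp ha with rfl | ha
    exacts [fun hf => hstep.not_isTokenBoundary hc (htail.isTokenBoundary hf), ih ha]

end MergeTrace

section Encode

variable [DecidableEq τ] {B} {i : ℕ} {l r n : τ}

lemma replaceLeftmost_eq_some {T T' : List τ} {p : ℕ}
    (h : B.replaceLeftmost l r n T = some (p, T')) :
    ∃ A C, T = A ++ l :: r :: C ∧ T' = A ++ n :: C ∧ (B.decodeSeq A).length = p := by
  fun_induction B.replaceLeftmost l r n T generalizing p T' with
  | case1 | case2 => simp at h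
  | case3 t u rest htu =>
    obtain ⟨rfl, rfl⟩ := htu
    simp only [Option.some.injEq, Prod.mk.injEq] at h
    exact ⟨[], rest, by simp [← h.1, ← h.2]⟩
  | case4 t u rest _ ih =>
    obtain ⟨⟨p₀, T₀⟩, h₀, heq⟩ := Option.map_eq_some_iff.mp h
    obtain ⟨A, C, hT, rfl, rfl⟩ := ih h₀
    simp only [Prod.mk.injEq] at heq
    exact ⟨t :: A, C, by simp [hT], by simp [← heq.2], by simp [← heq.1, add_comm]⟩

lemma applyApp_of_replaceLeftmost (hi : B.merges[i]? = some (l, r, n))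
    {T T' : List τ} {p : ℕ} (h : B.replaceLeftmost l r n T = some (p, T')) :
    B.ApplyApp (i, p) T T' := by
  obtain ⟨hlt, hm⟩ := List.getElem?_eq_some_iff.mp hi
  obtain ⟨A, C, rfl, rfl, hA⟩ := replaceLeftmost_eq_some h
  exact ⟨hlt, A, C, by simp [hm], hA, by simp [hm]⟩

lemma mergeTrace_runMerge (hi : B.merges[i]? = some (l, r, n)) (fuel : ℕ) (T : List τ) :
    B.MergeTrace T ((B.runMerge l r n fuel T).2.map (i, ·)) (B.runMerge l r n fuel T).1 := by
  induction fuel generalizing T with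
  | zero => exact .nil T
  | succ fuel ih =>
    rw [runMerge]
    rcases h : B.replaceLeftmost l r n T with _ | ⟨p, T'⟩
    · exact .nil T
    · exact .cons (applyApp_of_replaceLeftmost hi h) (ih T')

lemma mergeTrace_encodeRunAux :
    ∀ (ms : List (ℕ × τ × τ × τ)) (T : List τ), (∀ x ∈ ms, B.merges[x.1]? = some x.2) →
      B.MergeTrace T (B.encodeRunAux ms T).2 (B.encodeRunAux ms T).1
  | [], T, _ => .nil T
  | _ :: ms, T, hms =>
    (mergeTrace_runMerge (hms _ List.mem_cons_self) T.length T).append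
      (mergeTrace_encodeRunAux ms _ fun x hx => hms x (List.mem_cons_of_mem _ hx))

variable (B)

lemma mergeTrace_encode (S : List σ) :
    B.MergeTrace (S.map B.base) (B.encodeApps S) (B.encode S) :=
  mergeTrace_encodeRunAux _ _ fun x hx => by
    obtain ⟨y, hy, rfl⟩ := List.mem_map.mp hx
    exact List.mem_zipIdx_iff_getElem?.mp hy

lemma decodeSeq_encode (S : List σ) : B.decodeSeq (B.encode S) = S := by
  rw [(B.mergeTrace_encode S).decodeSeq_eq, decodeSeq_map_base]

end Encode

end BPE

theorem BPE.token_crosses_of_crossing_merge_general {σ τ : Type*} [DecidableEq τ]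
    (B : BPE σ τ) (S₁ S₂ : List σ)
    (h : B.MergeCrossesInRun (S₁ ++ S₂) S₁.length) :
    B.TokenCrosses (B.encode (S₁ ++ S₂)) S₁.length ∧
      B.encode (S₁ ++ S₂) ≠ B.encode S₁ ++ B.encode S₂ := by
  obtain ⟨app, happ, hcross⟩ := h
  have hnb : ¬B.IsTokenBoundary (B.encode (S₁ ++ S₂)) S₁.length :=
    (B.mergeTrace_encode (S₁ ++ S₂)).not_isTokenBoundary happ hcross
  refine ⟨tokenCrosses_of_not_isTokenBoundary hnb (by simp [decodeSeq_encode]), fun heq => ?_⟩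
  have hb := isTokenBoundary_append_length (B := B) (B.encode S₁) (B.encode S₂)
  exact hnb (by simpa [heq, decodeSeq_encode] using hb)

/-- If some merge applied during the run of `encode` on `S₁ ++ S₂` crosses
position `|S₁|`, then the final token sequence `encode (S₁ ++ S₂)` contains a
token crossing position `|S₁|`; in particular,
`encode (S₁ ++ S₂) ≠ encode S₁ ++ encode S₂`. -/
theorem BPE.token_crosses_of_crossing_merge {σ τ : Type*} [DecidableEq τ]
    (B : BPE σ τ) (hNF : B.NormalForm) (S₁ S₂ : List σ)
    (h : B.MergeCrossesInRun (S₁ ++ S₂) S₁.length) :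
    B.TokenCrosses (B.encode (S₁ ++ S₂)) S₁.length ∧
      B.encode (S₁ ++ S₂) ≠ B.encode S₁ ++ B.encode S₂ :=
  BPE.token_crosses_of_crossing_merge_general B S₁ S₂ h
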